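/- A minimal distal ℤ^d-system (X,T₁,…,T_d) has the unique closing parallelepiped property if and only if R_{T₁,…,T_d}(X) = Δ_X. -/

import Mathlib

open Function Set

/-- The group of self-homeomorphisms of a topological space, under composition. -/
instance homeomorphGroup {X : Type*} [TopologicalSpace X] : Group (X ≃ₜ X) where
  mul f g := g.trans f
  one := Homeomorph.refl X
  inv := Homeomorph.symm
  mul_assoc _ _ _ := rfl
  one_mul _ := Homeomorph.ext fun _ => rfl
  mul_one _ := Homeomorph.ext fun _ => rfl
  inv_mul_cancel f := Homeomorph.self_trans_symm f

variable {d : ℕ}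

/-- The homeomorphism `T₁^{n₁ε₁} ⋯ T_d^{n_dε_d}` associated with `n ∈ ℤ^d` and a vertex
`ε ∈ {0,1}^d` of the cube. -/
def cubeMap {X : Type*} [TopologicalSpace X] (T : Fin d → X ≃ₜ X)
    (n : Fin d → ℤ) (ε : Fin d → Bool) : X ≃ₜ X :=
  ((List.finRange d).map (fun i => T i ^ (if ε i then n i else 0))).prod

/-- The space of directional dynamical cubes `Q_{T₁,…,T_d}(X)`. -/
def cubes {X : Type*} [TopologicalSpace X] (T : Fin d → X ≃ₜ X) :
    Set ((Fin d → Bool) → X) :=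
  closure {y | ∃ (x : X) (n : Fin d → ℤ), ∀ ε, y ε = cubeMap T n ε x}

/-- The group of homeomorphisms generated by `T₁,…,T_d`. -/
def genGroup {X : Type*} [TopologicalSpace X] (T : Fin d → X ≃ₜ X) : Subgroup (X ≃ₜ X) :=
  Subgroup.closure (Set.range T)

/-- Minimality: every orbit is dense. -/
def IsMinimalSystem {X : Type*} [TopologicalSpace X] (T : Fin d → X ≃ₜ X) : Prop :=
  ∀ x : X, Dense {y : X | ∃ g ∈ genGroup T, g x = y}

/-- Distality: `inf_{g ∈ G} dist (g x) (g y) > 0` whenever `x ≠ y`. -/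
def IsDistalSystem {X : Type*} [MetricSpace X] (T : Fin d → X ≃ₜ X) : Prop :=
  ∀ x y : X, x ≠ y → ∃ δ > 0, ∀ g ∈ genGroup T, δ ≤ dist (g x) (g y)

/-- Unique closing parallelepiped property: two cubes agreeing in `2^d - 1` of their
coordinates are equal. -/
def HasUCP {X : Type*} [TopologicalSpace X] (T : Fin d → X ≃ₜ X) : Prop :=
  ∀ x ∈ cubes T, ∀ y ∈ cubes T,
    ∀ ε₀ : Fin d → Bool, (∀ ε, ε ≠ ε₀ → x ε = y ε) → x = y

/-- The relation `R_{T_j}(X)`: pairs `(x,y)` for which there is a cube `z` with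
`z_∅ = x`, `z_{{j}} = y` and `z_ε = z_{ε ∪ {j}}` for every nonempty `ε ⊆ [d] \ {j}`. -/
def relRT {X : Type*} [TopologicalSpace X] (T : Fin d → X ≃ₜ X) (j : Fin d) : Set (X × X) :=
  {p | ∃ z ∈ cubes T, z (fun _ => false) = p.1 ∧ z (fun i => decide (i = j)) = p.2 ∧
    ∀ ε : Fin d → Bool, ε j = false → ε ≠ (fun _ => false) →
      z ε = z (Function.update ε j true)}

/-- The `(T₁,…,T_d)`-regionally proximal relation. -/
def relRP {X : Type*} [TopologicalSpace X] (T : Fin d → X ≃ₜ X) : Set (X × X) :=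
  ⋂ j : Fin d, relRT T j

/-!
If `(a, b) ∈ R_{T_j}` is witnessed by a cube `z`, collapsing `z` in direction `j` gives a cube
that agrees with `z` off the vertex `{j}`, so unique closing forces `a = b`. For the converse, let
`E` be the enveloping semigroup of the action on `X^{2^d}` of the diagonal group together with the
face transformations. Distality makes every `p ∈ E` injective and orbit closures symmetric, so
with minimality the constant cube at `x ε₀` is `p x` for some `p ∈ E`.
If `y` agrees with `x` off `ε₀`, then `p y` is constant off `ε₀`; reflected so that `ε₀` becomes
`{j}`, this says that its two values are `R_{T_j}`-related for every `j`. Hence `R = Δ` gives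
`p y = p x`, and `y = x`.
-/

section CubeMap

variable {X : Type*} [TopologicalSpace X] {T : Fin d → X ≃ₜ X}

lemma commute_of_mem_genGroup (hT : ∀ i j, Commute (T i) (T j)) {g h : X ≃ₜ X}
    (hg : g ∈ genGroup T) (hh : h ∈ genGroup T) : Commute g h :=
  have : IsMulCommutative (genGroup T) := Subgroup.isMulCommutative_closure <| by
    rintro _ ⟨i, rfl⟩ _ ⟨j, rfl⟩
    exact hT i j
  setLike_mul_comm hg hh

lemma list_prod_map_zpow_mem_genGroup (l : List (Fin d)) (e : Fin d → ℤ) :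
    (l.map fun i => T i ^ e i).prod ∈ genGroup T :=
  list_prod_mem <| List.forall_mem_map.2 fun i _ =>
    zpow_mem (Subgroup.subset_closure (mem_range_self i)) _

lemma list_prod_map_zpow_mul (hT : ∀ i j, Commute (T i) (T j)) (l : List (Fin d))
    (e f : Fin d → ℤ) :
    (l.map fun i => T i ^ e i).prod * (l.map fun i => T i ^ f i).prod
      = (l.map fun i => T i ^ (e i + f i)).prod := by
  induction l with
  | nil => simp
  | cons a t ih =>
    have hc : Commute (t.map fun i => T i ^ e i).prod (T a ^ f a) :=
      commute_of_mem_genGroup hT (list_prod_map_zpow_mem_genGroup t e)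
        (zpow_mem (Subgroup.subset_closure (mem_range_self a)) _)
    simp only [List.map_cons, List.prod_cons]
    rw [hc.mul_mul_mul_comm, ih, ← zpow_add]

lemma cubeMap_mem_genGroup (n : Fin d → ℤ) (ε : Fin d → Bool) : cubeMap T n ε ∈ genGroup T :=
  list_prod_map_zpow_mem_genGroup _ _

lemma cubeMap_zero (ε : Fin d → Bool) : cubeMap T 0 ε = 1 := by
  simp [cubeMap]

lemma cubeMap_add (hT : ∀ i j, Commute (T i) (T j)) (n m : Fin d → ℤ) (ε : Fin d → Bool) :
    cubeMap T (n + m) ε = cubeMap T n ε * cubeMap T m ε := by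
  rw [cubeMap, cubeMap, cubeMap, list_prod_map_zpow_mul hT]
  congr! 3 with i
  cases ε i <;> simp

lemma cubeMap_xor (hT : ∀ i j, Commute (T i) (T j)) (n : Fin d → ℤ) (s ε : Fin d → Bool) :
    cubeMap T n (fun i => xor (s i) (ε i))
      = cubeMap T (fun i => if s i then -n i else n i) ε * cubeMap T n s := by
  rw [cubeMap, cubeMap, cubeMap, list_prod_map_zpow_mul hT]
  congr! 3 with i
  cases s i <;> cases ε i <;> simp

lemma cubeMap_update_false (n : Fin d → ℤ) (ε : Fin d → Bool) (j : Fin d) :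
    cubeMap T n (update ε j false) = cubeMap T (update n j 0) ε := by
  unfold cubeMap
  congr! 3 with i
  by_cases hij : i = j
  · subst hij; simp
  · simp [update_of_ne hij]

end CubeMap

section Cubes

variable {X : Type*} [TopologicalSpace X] {T : Fin d → X ≃ₜ X}

lemma cubeMap_mem_cubes (x : X) (n : Fin d → ℤ) : (fun ε => cubeMap T n ε x) ∈ cubes T :=
  subset_closure ⟨x, n, fun _ => rfl⟩

lemma const_mem_cubes (x : X) : (fun _ => x) ∈ cubes T := by
  simpa [cubeMap_zero] using cubeMap_mem_cubes (T := T) x 0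

lemma mapsTo_cubes {F : ((Fin d → Bool) → X) → (Fin d → Bool) → X} (hF : Continuous F)
    (h : ∀ x n, F (fun ε => cubeMap T n ε x) ∈ cubes T) : MapsTo F (cubes T) (cubes T) :=
  fun _ hz => closure_minimal (by rintro _ ⟨x, n, hy⟩; rw [funext hy]; exact h x n)
    (isClosed_closure.preimage hF) hz

lemma xor_mem_cubes (hT : ∀ i j, Commute (T i) (T j)) (s : Fin d → Bool)
    {z : (Fin d → Bool) → X} (hz : z ∈ cubes T) :
    (fun ε => z fun i => xor (s i) (ε i)) ∈ cubes T := by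
  refine mapsTo_cubes (continuous_pi fun _ => continuous_apply _) (fun x n => ?_) hz
  simp only [cubeMap_xor hT]
  exact cubeMap_mem_cubes _ _

lemma update_false_mem_cubes (j : Fin d) {z : (Fin d → Bool) → X} (hz : z ∈ cubes T) :
    (fun ε => z (update ε j false)) ∈ cubes T := by
  refine mapsTo_cubes (continuous_pi fun _ => continuous_apply _) (fun x n => ?_) hz
  simp only [cubeMap_update_false]
  exact cubeMap_mem_cubes _ _

lemma HasUCP.eq_of_mem_relRT (hucp : HasUCP T) {j : Fin d} {a b : X}
    (hab : (a, b) ∈ relRT T j) : a = b := by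
  obtain ⟨z, hz, rfl, rfl, hface⟩ := hab
  have hagree : ∀ ε, ε ≠ (fun i => decide (i = j)) → z ε = z (update ε j false) := by
    intro ε hε
    cases hεj : ε j
    · rw [← hεj, update_eq_self]
    · have hne : update ε j false ≠ fun _ => false := by
        refine fun h => hε (funext fun i => ?_)
        by_cases hij : i = j
        · simp [hij, hεj]
        · simpa [hij, update_of_ne hij] using congrFun h i
      rw [hface _ (by simp) hne, update_idem, ← hεj, update_eq_self]
  rw [congrFun (hucp z hz _ (update_false_mem_cubes j hz) _ hagree) fun i => decide (i = j)]
  congr 1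
  funext i
  by_cases hij : i = j <;> simp [hij]

lemma mem_relRT_of_eq_off_vertex (hT : ∀ i j, Commute (T i) (T j)) {v : (Fin d → Bool) → X}
    (hv : v ∈ cubes T) {ε₀ : Fin d → Bool} {c : X} (hc : ∀ ε, ε ≠ ε₀ → v ε = c) (j : Fin d) :
    (c, v ε₀) ∈ relRT T j := by
  -- reflecting by `s` swaps the vertices `ε₀` and `{j}`
  set s : Fin d → Bool := fun i => xor (ε₀ i) (decide (i = j))
  have hs : ∀ ε, (fun i => xor (s i) (ε i)) = ε₀ ↔ ε = fun i => decide (i = j) := by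
    intro ε
    simp only [funext_iff, s]
    refine forall_congr' fun i => ?_
    cases ε₀ i <;> cases ε i <;> cases decide (i = j) <;> simp
  have hoff : ∀ ε, ε ≠ (fun i => decide (i = j)) → v (fun i => xor (s i) (ε i)) = c :=
    fun ε hε => hc _ ((hs ε).not.2 hε)
  refine ⟨_, xor_mem_cubes hT s hv, hoff _ ?_, congrArg v ((hs _).2 rfl), ?_⟩
  · exact fun h => by simpa using congrFun h j
  · intro ε hεj hε
    rw [hoff ε fun h => by simpa [hεj] using congrFun h j, hoff]
    refine fun h => hε (funext fun i => ?_)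
    by_cases hij : i = j
    · simp [hij, hεj]
    · simpa [hij, update_of_ne hij] using congrFun h i

lemma HasUCP.relRP_eq_diagonal (hucp : HasUCP T) : relRP T = diagonal X := by
  refine subset_antisymm ?_ ?_
  · rintro ⟨a, b⟩ hab
    rcases isEmpty_or_nonempty (Fin d) with hd | ⟨⟨j⟩⟩
    · exact congrFun (hucp _ (const_mem_cubes a) _ (const_mem_cubes b) (fun _ => true)
        fun _ hε => absurd (Subsingleton.elim _ _) hε) fun _ => true
    · exact hucp.eq_of_mem_relRT (mem_iInter.1 hab j)
  · rintro ⟨a, b⟩ (rfl : a = b)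
    exact mem_iInter.2 fun j => ⟨_, const_mem_cubes a, rfl, rfl, fun _ _ _ => rfl⟩

end Cubes

def IsDistalFamily {Y : Type*} [Dist Y] (H : Set (Y → Y)) : Prop :=
  ∀ a b : Y, a ≠ b → ∃ δ > 0, ∀ f ∈ H, δ ≤ dist (f a) (f b)

section Enveloping

variable {Y : Type*} {H : Set (Y → Y)}

lemma comp_mem_closure [TopologicalSpace Y] (hcont : ∀ f ∈ H, Continuous f)
    (hcomp : ∀ f ∈ H, ∀ g ∈ H, f ∘ g ∈ H) {p q : Y → Y} (hp : p ∈ closure H)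
    (hq : q ∈ closure H) : p ∘ q ∈ closure H := by
  have hleft : ∀ f ∈ H, f ∘ q ∈ closure H := fun f hf =>
    closure_minimal (t := (f ∘ ·) ⁻¹' closure H) (fun g hg => subset_closure (hcomp f hf g hg))
      (isClosed_closure.preimage (continuous_pi fun y => (hcont f hf).comp (continuous_apply y)))
      hq
  exact closure_minimal (t := (· ∘ q) ⁻¹' closure H) hleft
    (isClosed_closure.preimage (continuous_pi fun y => continuous_apply (q y))) hp

lemma image_eval_closure [TopologicalSpace Y] [CompactSpace Y] [T2Space Y] (a : Y) :
    (fun f => f a) '' closure H = closure ((fun f => f a) '' H) :=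
  subset_antisymm (image_closure_subset_closure_image (continuous_apply a))
    (closure_minimal (image_mono subset_closure)
      (isClosed_closure.isCompact.image (continuous_apply a)).isClosed)

lemma IsDistalFamily.injective_of_mem_closure [PseudoMetricSpace Y] (hdistal : IsDistalFamily H)
    {p : Y → Y} (hp : p ∈ closure H) : Injective p := by
  intro a b hab
  by_contra hne
  obtain ⟨δ, hδ, hfar⟩ := hdistal a b hne
  have : δ ≤ dist (p a) (p b) := closure_minimal hfar
    (isClosed_le continuous_const ((continuous_apply a).dist (continuous_apply b))) hp
  rw [hab, dist_self] at this
  exact hδ.not_ge this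

/-- Ellis: by compactness `closure H ∘ p` contains an idempotent `e = q ∘ p`, and distality
makes the injective idempotent `e` the identity. -/
lemma IsDistalFamily.exists_comp_eq_id_of_mem_closure [MetricSpace Y] [CompactSpace Y]
    (hdistal : IsDistalFamily H) (hcont : ∀ f ∈ H, Continuous f) (hid : id ∈ H)
    (hcomp : ∀ f ∈ H, ∀ g ∈ H, f ∘ g ∈ H) {p : Y → Y} (hp : p ∈ closure H) :
    ∃ q ∈ closure H, q ∘ p = id := by
  let : TopologicalSpace (Function.End Y) := inferInstanceAs (TopologicalSpace (Y → Y))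
  let : T2Space (Function.End Y) := inferInstanceAs (T2Space (Y → Y))
  have hcomp' : ∀ {p q : Y → Y}, p ∈ closure H → q ∈ closure H → p ∘ q ∈ closure H :=
    comp_mem_closure hcont hcomp
  obtain ⟨e, ⟨q, hq, rfl⟩, hidem⟩ := exists_idempotent_in_compact_subsemigroup
    (M := Function.End Y) (fun r => continuous_pi fun y => continuous_apply (r y))
    ((fun q : Y → Y => q ∘ p) '' closure H) ⟨p, id, subset_closure hid, rfl⟩
    (isClosed_closure.isCompact.image (continuous_pi fun y => continuous_apply (p y)))
    (by
      rintro _ ⟨q, hq, rfl⟩ _ ⟨q', hq', rfl⟩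
      exact ⟨(q ∘ p) ∘ q', hcomp' (hcomp' hq hp) hq', rfl⟩)
  refine ⟨q, hq, funext fun y => hdistal.injective_of_mem_closure (hcomp' hq hp) ?_⟩
  exact congrFun hidem y

end Enveloping

section CubeTransformations

variable {X : Type*} [TopologicalSpace X] {T : Fin d → X ≃ₜ X}

/-- The group generated by the diagonal action of `G` and the face transformations. -/
def cubeTransformations (T : Fin d → X ≃ₜ X) :
    Set (((Fin d → Bool) → X) → (Fin d → Bool) → X) :=
  {F | ∃ g ∈ genGroup T, ∃ n : Fin d → ℤ, F = fun z ε => g (cubeMap T n ε (z ε))}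

lemma cubeMap_apply_comm (hT : ∀ i j, Commute (T i) (T j)) {g : X ≃ₜ X}
    (hg : g ∈ genGroup T) (n : Fin d → ℤ) (ε : Fin d → Bool) (x : X) :
    cubeMap T n ε (g x) = g (cubeMap T n ε x) :=
  DFunLike.congr_fun (commute_of_mem_genGroup hT (cubeMap_mem_genGroup n ε) hg).eq x

lemma continuous_of_mem_cubeTransformations {F : ((Fin d → Bool) → X) → (Fin d → Bool) → X}
    (hF : F ∈ cubeTransformations T) : Continuous F := by
  obtain ⟨g, -, n, rfl⟩ := hF
  exact continuous_pi fun ε => (g.continuous.comp (cubeMap T n ε).continuous).comp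
    (continuous_apply ε)

lemma id_mem_cubeTransformations : id ∈ cubeTransformations T :=
  ⟨1, one_mem _, 0, by simp only [cubeMap_zero]; rfl⟩

lemma comp_mem_cubeTransformations (hT : ∀ i j, Commute (T i) (T j))
    {F F' : ((Fin d → Bool) → X) → (Fin d → Bool) → X} (hF : F ∈ cubeTransformations T)
    (hF' : F' ∈ cubeTransformations T) : F ∘ F' ∈ cubeTransformations T := by
  obtain ⟨g, hg, n, rfl⟩ := hF
  obtain ⟨g', hg', n', rfl⟩ := hF'
  refine ⟨g * g', mul_mem hg hg', n + n', funext fun z => funext fun ε => ?_⟩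
  simp only [comp_apply, cubeMap_apply_comm hT hg', cubeMap_add hT]
  rfl

lemma mapsTo_cubes_of_mem_cubeTransformations (hT : ∀ i j, Commute (T i) (T j))
    {F : ((Fin d → Bool) → X) → (Fin d → Bool) → X} (hF : F ∈ cubeTransformations T) :
    MapsTo F (cubes T) (cubes T) := by
  refine mapsTo_cubes (continuous_of_mem_cubeTransformations hF) fun x m => ?_
  obtain ⟨g, hg, n, rfl⟩ := hF
  convert cubeMap_mem_cubes (T := T) (g x) (n + m) using 2 with ε
  show g (cubeMap T n ε (cubeMap T m ε x)) = cubeMap T (n + m) ε (g x)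
  rw [cubeMap_apply_comm hT hg, cubeMap_add hT]
  rfl

lemma mapsTo_cubes_of_mem_closure (hT : ∀ i j, Commute (T i) (T j))
    {p : ((Fin d → Bool) → X) → (Fin d → Bool) → X} (hp : p ∈ closure (cubeTransformations T)) :
    MapsTo p (cubes T) (cubes T) := fun z hz =>
  closure_minimal (t := {F : ((Fin d → Bool) → X) → (Fin d → Bool) → X | F z ∈ cubes T})
    (fun _ hF => mapsTo_cubes_of_mem_cubeTransformations hT hF hz)
    (isClosed_closure.preimage (continuous_apply z)) hp

lemma apply_eq_of_mem_closure [T2Space X] {p : ((Fin d → Bool) → X) → (Fin d → Bool) → X}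
    (hp : p ∈ closure (cubeTransformations T)) {z w : (Fin d → Bool) → X} {ε : Fin d → Bool}
    (h : z ε = w ε) : p z ε = p w ε :=
  closure_minimal (t := {F : ((Fin d → Bool) → X) → (Fin d → Bool) → X | F z ε = F w ε})
    (by rintro _ ⟨g, -, n, rfl⟩; exact congrArg (g ∘ cubeMap T n ε) h)
    (isClosed_eq ((continuous_apply ε).comp (continuous_apply z))
      ((continuous_apply ε).comp (continuous_apply w))) hp

end CubeTransformations

section Distal

variable {X : Type*} [MetricSpace X] {T : Fin d → X ≃ₜ X}

lemma isDistalFamily_cubeTransformations (hdist : IsDistalSystem T) :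
    IsDistalFamily (cubeTransformations T) := by
  intro z w hzw
  obtain ⟨ε, hε⟩ := Function.ne_iff.1 hzw
  obtain ⟨δ, hδ, hfar⟩ := hdist _ _ hε
  refine ⟨δ, hδ, ?_⟩
  rintro _ ⟨g, hg, n, rfl⟩
  exact (hfar _ (mul_mem hg (cubeMap_mem_genGroup n ε))).trans
    (dist_le_pi_dist (fun ε => g (cubeMap T n ε (z ε))) (fun ε => g (cubeMap T n ε (w ε))) ε)

lemma cubes_subset_image_closure [CompactSpace X]
    (hT : ∀ i j, Commute (T i) (T j)) (hmin : IsMinimalSystem T) (hdist : IsDistalSystem T)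
    {x : (Fin d → Bool) → X} (hx : x ∈ cubes T) :
    cubes T ⊆ (fun p => p x) '' closure (cubeTransformations T) := by
  have hcomp : ∀ {p q}, p ∈ closure (cubeTransformations T) →
      q ∈ closure (cubeTransformations T) → p ∘ q ∈ closure (cubeTransformations T) :=
    comp_mem_closure (fun _ => continuous_of_mem_cubeTransformations)
      (fun _ hF _ hF' => comp_mem_cubeTransformations hT hF hF')
  set x₀ := x fun _ => false
  have hconst : cubes T ⊆ (fun p => p fun _ => x₀) '' closure (cubeTransformations T) := by
    rw [image_eval_closure]
    refine closure_minimal ?_ isClosed_closure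
    rintro _ ⟨a, n, hy⟩
    rw [funext hy]
    refine closure_mono ?_ (image_closure_subset_closure_image
      (continuous_pi fun ε => (cubeMap T n ε).continuous) ⟨a, hmin x₀ a, rfl⟩)
    rintro _ ⟨_, ⟨g, hg, rfl⟩, rfl⟩
    exact ⟨_, ⟨g, hg, n, rfl⟩, funext fun ε => (cubeMap_apply_comm hT hg n ε x₀).symm⟩
  obtain ⟨p, hp, hpx⟩ := hconst hx
  obtain ⟨q, hq, hqp⟩ :=
    (isDistalFamily_cubeTransformations hdist).exists_comp_eq_id_of_mem_closure
      (fun _ => continuous_of_mem_cubeTransformations) id_mem_cubeTransformations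
      (fun _ hF _ hF' => comp_mem_cubeTransformations hT hF hF') hp
  rintro w hw
  obtain ⟨r, hr, rfl⟩ := hconst hw
  exact ⟨r ∘ q, hcomp hr hq, by rw [← hpx]; exact congrArg r (congrFun hqp _)⟩

lemma hasUCP_of_relRP_eq_diagonal [CompactSpace X]
    (hT : ∀ i j, Commute (T i) (T j)) (hmin : IsMinimalSystem T) (hdist : IsDistalSystem T)
    (hR : relRP T = diagonal X) : HasUCP T := by
  intro x hx y hy ε₀ hxy
  obtain ⟨p, hp, hpx : p x = fun _ => x ε₀⟩ :=
    cubes_subset_image_closure hT hmin hdist hx (const_mem_cubes (x ε₀))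
  have hpy : ∀ ε, ε ≠ ε₀ → p y ε = x ε₀ := fun ε hε => by
    rw [← apply_eq_of_mem_closure hp (hxy ε hε)]
    exact congrFun hpx ε
  have hrel : (x ε₀, p y ε₀) ∈ relRP T :=
    mem_iInter.2 (mem_relRT_of_eq_off_vertex hT (mapsTo_cubes_of_mem_closure hT hp hy) hpy)
  rw [hR] at hrel
  refine (isDistalFamily_cubeTransformations hdist).injective_of_mem_closure hp
    (funext fun ε => ?_)
  rw [hpx]
  by_cases hε : ε = ε₀
  · subst hε
    exact hrel
  · exact (hpy ε hε).symm

end Distal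

/-- **Theorem `StructThm`, (1) ⇔ (2).**  A minimal distal `ℤ^d`-system has the unique
closing parallelepiped property iff `R_{T₁,…,T_d}(X) = Δ_X`. -/
theorem ucp_iff_relRP_trivial {X : Type*} [MetricSpace X] [CompactSpace X] {d : ℕ}
    (T : Fin d → X ≃ₜ X)
    (hcomm : ∀ i j : Fin d, ∀ x : X, T i (T j x) = T j (T i x))
    (hmin : IsMinimalSystem T) (hdist : IsDistalSystem T) :
    HasUCP T ↔ relRP T = Set.diagonal X := by
  have hT : ∀ i j, Commute (T i) (T j) := fun i j => Homeomorph.ext (hcomm i j)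
  exact ⟨HasUCP.relRP_eq_diagonal, hasUCP_of_relRP_eq_diagonal hT hmin hdist⟩
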